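/- With N odd, C ⊂ E(k) cyclic of order N, and h_χ the normalized function with divisor φ^*Q − C attached to a character χ : C → k^× via the Weil pairing: for each χ there is a root of unity u ∈ μ with [−1]^* h_χ = u·h_{χ^{−1}}. -/
import Mathlib


/-- An abstract model of the group of points and the function field of an elliptic curve `E`
over `k`, together with divisors, pullbacks along translations and inversion, and the
pushforward (norm) maps `[n]_*` along the multiplication-by-`n` isogenies. -/
structure CurveFn (k : Type) [Field k] where
  /-- the group of points `E(k)` (all points are closed since `k` is algebraically closed) -/
  Pt : Type
  [grp : AddCommGroup Pt]
  /-- the function field `k(E)` -/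
  F : Type
  [fld : Field F]
  [alg : Algebra k F]
  /-- the divisor of a nonzero rational function -/
  div : Fˣ → (Pt →₀ ℤ)
  div_mul : ∀ f g : Fˣ, div (f * g) = div f + div g
  div_degree : ∀ f : Fˣ, (div f).sum (fun _ n => n) = 0
  /-- the inclusion of the constants `k^× ⊆ k(E)^×` -/
  constU : kˣ →* Fˣ
  constU_spec : ∀ a : kˣ, ((constU a : Fˣ) : F) = algebraMap k F (a : k)
  div_constU : ∀ a : kˣ, div (constU a) = 0
  eq_constU_of_div_eq_zero : ∀ f : Fˣ, div f = 0 → ∃ a : kˣ, f = constU a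
  /-- pullback `τ_P^*` along translation by a point `P` -/
  tau : Pt → (F ≃+* F)
  tau_algebraMap : ∀ (P : Pt) (a : k), tau P (algebraMap k F a) = algebraMap k F a
  tau_zero : tau 0 = RingEquiv.refl F
  tau_add : ∀ P Q : Pt, tau (P + Q) = (tau Q).trans (tau P)
  div_tau : ∀ (P : Pt) (f : Fˣ),
    div (Units.map (tau P).toRingHom.toMonoidHom f) = (div f).mapDomain (fun x => x - P)
  /-- the pushforward (norm) `[n]_*` along multiplication by `n` -/
  pushNorm : ℕ → (Fˣ →* Fˣ)
  div_pushNorm : ∀ (n : ℕ) (f : Fˣ),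
    div (pushNorm n f) = (div f).mapDomain (fun P => (n : ℤ) • P)
  pushNorm_constU : ∀ (n : ℕ) (a : kˣ), pushNorm n (constU a) = constU (a ^ (n ^ 2))
  pushNorm_mul_eq : ∀ m n : ℕ, pushNorm (m * n) = (pushNorm m).comp (pushNorm n)
  pushNorm_tau : ∀ (n : ℕ) (P : Pt) (f : Fˣ),
    pushNorm n (Units.map (tau P).toRingHom.toMonoidHom f)
      = Units.map (tau (n • P)).toRingHom.toMonoidHom (pushNorm n f)
  /-- pullback `[-1]^*` along the inversion map of `E` -/
  negPull : F ≃+* F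
  negPull_algebraMap : ∀ a : k, negPull (algebraMap k F a) = algebraMap k F a
  negPull_negPull : ∀ x : F, negPull (negPull x) = x
  div_negPull : ∀ f : Fˣ,
    div (Units.map negPull.toRingHom.toMonoidHom f) = (div f).mapDomain (fun x => -x)
  negPull_tau : ∀ (P : Pt) (x : F), negPull (tau (-P) x) = tau P (negPull x)

attribute [instance] CurveFn.grp CurveFn.fld CurveFn.alg

variable {k : Type} [Field k]

/-- pullback along translation, on units -/
def CurveFn.tauU (X : CurveFn k) (P : X.Pt) : X.Fˣ →* X.Fˣ :=
  Units.map (X.tau P).toRingHom.toMonoidHom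

/-- pullback along inversion, on units -/
def CurveFn.negPullU (X : CurveFn k) : X.Fˣ →* X.Fˣ :=
  Units.map X.negPull.toRingHom.toMonoidHom

/-- `a` is a root of unity. -/
def IsRootOfUnity {M : Type*} [Monoid M] (a : M) : Prop := ∃ n : ℕ, 0 < n ∧ a ^ n = 1

/-- `f ∈ k(E)^×` is *normalized* if `[n]_* f` is a constant root of unity for some `n ≥ 1`. -/
def CurveFn.Normalized (X : CurveFn k) (f : X.Fˣ) : Prop :=
  ∃ n : ℕ, 0 < n ∧ ∃ u : kˣ, IsRootOfUnity u ∧ X.pushNorm n f = X.constU u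


namespace CurveFn

variable {k : Type} [Field k] (X : CurveFn k)

lemma div_one' : X.div 1 = 0 := by
  have h := X.div_mul 1 1
  rw [one_mul] at h
  exact left_eq_add.mp h

lemma div_inv' (f : X.Fˣ) : X.div f⁻¹ = -X.div f := by
  have h := X.div_mul f f⁻¹
  rw [mul_inv_cancel, X.div_one'] at h
  exact eq_neg_of_add_eq_zero_right h.symm

lemma div_prod {α : Type*} (s : Finset α) (f : α → X.Fˣ) :
    X.div (∏ i ∈ s, f i) = ∑ i ∈ s, X.div (f i) := by
  classical
  induction s using Finset.cons_induction with
  | empty => simpa using X.div_one'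
  | cons a s ha ih => rw [Finset.prod_cons, Finset.sum_cons, X.div_mul, ih]

lemma constU_inj : Function.Injective X.constU := by
  intro a b hab
  have h : ((X.constU a : X.Fˣ) : X.F) = ((X.constU b : X.Fˣ) : X.F) := by rw [hab]
  rw [X.constU_spec, X.constU_spec] at h
  exact Units.ext ((algebraMap k X.F).injective h)

lemma tauU_constU (P : X.Pt) (a : kˣ) : X.tauU P (X.constU a) = X.constU a := by
  apply Units.ext
  show X.tau P ((X.constU a : X.Fˣ) : X.F) = ((X.constU a : X.Fˣ) : X.F)
  rw [X.constU_spec, X.tau_algebraMap]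

lemma negPullU_constU (a : kˣ) : X.negPullU (X.constU a) = X.constU a := by
  apply Units.ext
  show X.negPull ((X.constU a : X.Fˣ) : X.F) = ((X.constU a : X.Fˣ) : X.F)
  rw [X.constU_spec, X.negPull_algebraMap]

lemma negPullU_tauU (P : X.Pt) (f : X.Fˣ) :
    X.negPullU (X.tauU P f) = X.tauU (-P) (X.negPullU f) := by
  apply Units.ext
  show X.negPull (X.tau P (f : X.F)) = X.tau (-P) (X.negPull (f : X.F))
  have h := X.negPull_tau (-P) (f : X.F)
  rwa [neg_neg] at h

lemma div_tauU (P : X.Pt) (f : X.Fˣ) :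
    X.div (X.tauU P f) = (X.div f).mapDomain (fun x => x - P) :=
  X.div_tau P f

lemma div_negPullU (f : X.Fˣ) :
    X.div (X.negPullU f) = (X.div f).mapDomain (fun x => -x) :=
  X.div_negPull f

lemma pushNorm_tauU (n : ℕ) (P : X.Pt) (f : X.Fˣ) :
    X.pushNorm n (X.tauU P f) = X.tauU (n • P) (X.pushNorm n f) :=
  X.pushNorm_tau n P f

end CurveFn

private lemma mapDomain_sub' {α β : Type*} (f : α → β) (v w : α →₀ ℤ) :
    Finsupp.mapDomain f (v - w) = Finsupp.mapDomain f v - Finsupp.mapDomain f w :=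
  map_sub (Finsupp.mapDomain.addMonoidHom f) v w

/-- The telescoping identity for sums of Dirac divisors along a torsion point. -/
private lemma telescope {A : Type*} [AddCommGroup A] {m : ℕ} (hm : 0 < m) {S : A}
    (hS : m • S = 0) (P : A) :
    ∑ s ∈ Finset.range m, Finsupp.single (P + S - s • S) (1 : ℤ)
      = ∑ s ∈ Finset.range m, Finsupp.single (P - s • S) (1 : ℤ) := by
  obtain ⟨t, rfl⟩ : ∃ t, m = t + 1 := ⟨m - 1, (Nat.succ_pred_eq_of_pos hm).symm⟩
  rw [Finset.sum_range_succ' (fun s => Finsupp.single (P + S - s • S) (1 : ℤ)) t,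
    Finset.sum_range_succ (fun s => Finsupp.single (P - s • S) (1 : ℤ)) t]
  have h1 : ∀ s : ℕ, P + S - (s + 1) • S = P - s • S := by
    intro s
    rw [succ_nsmul]
    abel
  have h2 : P - t • S = P + S - 0 • S := by
    have ht : t • S = -S := by
      rw [succ_nsmul] at hS
      exact eq_neg_of_add_eq_zero_left hS
    rw [ht, zero_nsmul]
    abel
  simp only [h1]
  rw [h2]

/-- With `N` odd, `C ⊂ E(k)` cyclic of order `N`, and `h_χ` the normalized
function with divisor `φ^*Q_χ − C` attached to a character `χ : C → k^×` via the Weil pairing: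
there is a root of unity `u ∈ μ` with `[−1]^* h_χ = u·h_{χ^{−1}}` (note `χ⁻¹(P) = χ(−P)`). -/
theorem inversion_h_chi_eq_h_chi_inv_up_to_mu
    (k : Type) [Field k] [IsAlgClosed k] (X : CurveFn k)
    (N : ℕ) [NeZero N] (hodd : Odd N) (hchar : (N : k) ≠ 0)
    (ι : ZMod N →+ X.Pt) (hι : Function.Injective ι)
    -- the isogeny `φ` with kernel `C`, its dual `φ̂`, and the Weil pairing `e_φ`
    (Pt' : Type) [AddCommGroup Pt'] (φ : X.Pt →+ Pt')
    (hker : ∀ x : X.Pt, φ x = 0 ↔ ∃ j : ZMod N, ι j = x)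
    (φhat : Pt' →+ X.Pt) (hdual : ∀ x : X.Pt, φhat (φ x) = N • x)
    (e : X.Pt → Pt' → kˣ)
    (e_bil : ∀ (P P' : X.Pt) (Q Q' : Pt'),
      e (P + P') Q = e P Q * e P' Q ∧ e P (Q + Q') = e P Q * e P Q')
    (e_nondeg : ∀ Q : Pt', φhat Q = 0 → (∀ P : X.Pt, φ P = 0 → e P Q = 1) → Q = 0)
    -- the character `χ` and the points `Q, Q'` corresponding to `χ` and `χ⁻¹`
    (χ : AddChar (ZMod N) kˣ)
    (Q Q' : Pt') (hQ : φhat Q = 0) (hQ' : φhat Q' = 0)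
    (hpair : ∀ j : ZMod N, e (ι j) Q = χ j)
    (hpair' : ∀ j : ZMod N, e (ι j) Q' = χ (-j))
    -- the normalized functions `h_χ` and `h_{χ⁻¹}`
    (R₀ R₀' : X.Pt) (hR₀ : φ R₀ = Q) (hR₀' : φ R₀' = Q')
    (h h' : X.Fˣ) (hnorm : X.Normalized h) (hnorm' : X.Normalized h')
    (hdivh : X.div h = (∑ j : ZMod N, Finsupp.single (R₀ + ι j) (1 : ℤ))
        - ∑ j : ZMod N, Finsupp.single (ι j) (1 : ℤ))
    (hdivh' : X.div h' = (∑ j : ZMod N, Finsupp.single (R₀' + ι j) (1 : ℤ))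
        - ∑ j : ZMod N, Finsupp.single (ι j) (1 : ℤ)) :
    ∃ u : kˣ, IsRootOfUnity u ∧ X.negPullU h = X.constU u * h' := by
  classical
  obtain ⟨n, hn, u, hu, hun⟩ := hnorm
  obtain ⟨n', hn', u', hu', hun'⟩ := hnorm'
  obtain ⟨c, hc, huc⟩ := hu
  obtain ⟨c', hc', huc'⟩ := hu'
  set m : ℕ := n' * n with hm_def
  have hm : 0 < m := Nat.mul_pos hn' hn
  set U : kˣ := u ^ n' ^ 2 with hU_def
  set U' : kˣ := u' ^ n ^ 2 with hU'_def
  have hU : X.pushNorm m h = X.constU U := by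
    rw [hm_def, X.pushNorm_mul_eq, MonoidHom.comp_apply, hun, X.pushNorm_constU]
  have hU' : X.pushNorm m h' = X.constU U' := by
    rw [hm_def, mul_comm n' n, X.pushNorm_mul_eq, MonoidHom.comp_apply, hun',
      X.pushNorm_constU]
  have hUc : U ^ c = 1 := by
    rw [hU_def, ← pow_mul, mul_comm, pow_mul, huc, one_pow]
  have hU'c : U' ^ c' = 1 := by
    rw [hU'_def, ← pow_mul, mul_comm, pow_mul, huc', one_pow]
  -- Step 1: extract `j₁` with `m • ι j₁ = m • R₀`.
  have hdiv0 : Finsupp.mapDomain (fun P : X.Pt => (m : ℤ) • P) (X.div h) = 0 := by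
    rw [← X.div_pushNorm, hU, X.div_constU]
  rw [hdivh, mapDomain_sub', Finsupp.mapDomain_finset_sum, Finsupp.mapDomain_finset_sum]
    at hdiv0
  simp only [Finsupp.mapDomain_single] at hdiv0
  have hkey : (∑ j : ZMod N, Finsupp.single ((m : ℤ) • (R₀ + ι j)) (1 : ℤ))
      = ∑ j : ZMod N, Finsupp.single ((m : ℤ) • ι j) (1 : ℤ) := sub_eq_zero.mp hdiv0
  have hj₁ : ∃ j : ZMod N, (m : ℤ) • ι j = (m : ℤ) • R₀ := by
    by_contra hcon
    push_neg at hcon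
    have happ := DFunLike.congr_fun hkey ((m : ℤ) • R₀)
    rw [Finsupp.finset_sum_apply, Finsupp.finset_sum_apply] at happ
    simp only [Finsupp.single_apply] at happ
    rw [Finset.sum_eq_zero (fun j _ => if_neg (hcon j))] at happ
    have h0 := (Finset.sum_eq_zero_iff_of_nonneg
      (fun j _ => by split <;> norm_num)).mp happ 0 (Finset.mem_univ 0)
    rw [if_pos (by rw [map_zero, add_zero])] at h0
    exact one_ne_zero h0
  obtain ⟨j₁, hj₁⟩ := hj₁
  set S : X.Pt := R₀ - ι j₁ with hS_def
  have hSm : m • S = 0 := by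
    have hz : (m : ℤ) • S = 0 := by rw [hS_def, smul_sub, hj₁, sub_self]
    rwa [natCast_zsmul] at hz
  -- the divisor of `h`, rewritten with base point `S`
  have hdivhS : X.div h = (∑ j : ZMod N, Finsupp.single (S + ι j) (1 : ℤ))
      - ∑ j : ZMod N, Finsupp.single (ι j) (1 : ℤ) := by
    rw [hdivh]
    congr 1
    refine Fintype.sum_bijective (fun x : ZMod N => x + j₁)
      (Equiv.addRight j₁).bijective _ _ (fun x => ?_)
    have hx : S + ι (x + j₁) = R₀ + ι x := by
      rw [hS_def, map_add]
      abel
    rw [hx]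
  -- Step 2: `Q' = -Q` and the point `j₂`.
  have hQQ' : Q + Q' = 0 := by
    apply e_nondeg
    · rw [map_add, hQ, hQ', add_zero]
    · intro P hP
      obtain ⟨j, rfl⟩ := (hker P).mp hP
      rw [(e_bil (ι j) (ι j) Q Q').2, hpair, hpair', ← AddChar.map_add_eq_mul,
        add_neg_cancel, AddChar.map_zero_eq_one]
  have hφι : φ (ι j₁) = 0 := (hker _).mpr ⟨j₁, rfl⟩
  have hj₂ : ∃ j : ZMod N, ι j = -S - R₀' := by
    apply (hker _).mp
    rw [map_sub, map_neg, hR₀', hS_def, map_sub, hR₀, hφι, sub_zero]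
    have hx : -Q - Q' = -(Q + Q') := by abel
    rw [hx, hQQ', neg_zero]
  obtain ⟨j₂, hj₂⟩ := hj₂
  -- Step 3: `div (ν h) = div h'`, hence `ν h = constU a * h'`.
  have hdivν : X.div (X.negPullU h) = X.div h' := by
    rw [X.div_negPullU, hdivhS, mapDomain_sub', Finsupp.mapDomain_finset_sum,
      Finsupp.mapDomain_finset_sum]
    simp only [Finsupp.mapDomain_single]
    rw [hdivh']
    congr 1
    · refine (Fintype.sum_bijective (fun x : ZMod N => j₂ - x)
        (Equiv.subLeft j₂).bijective _ _ (fun x => ?_)).symm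
      have hx : -(S + ι (j₂ - x)) = R₀' + ι x := by
        rw [map_sub, hj₂]
        abel
      rw [hx]
    · refine (Fintype.sum_bijective (fun x : ZMod N => -x)
        (Equiv.neg (ZMod N)).bijective _ _ (fun x => ?_)).symm
      rw [map_neg, neg_neg]
  have hdiv0' : X.div (X.negPullU h * h'⁻¹) = 0 := by
    rw [X.div_mul, X.div_inv', hdivν, add_neg_cancel]
  obtain ⟨a, ha⟩ := X.eq_constU_of_div_eq_zero _ hdiv0'
  have hνh : X.negPullU h = X.constU a * h' := by
    rw [← ha, inv_mul_cancel_right]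
  -- Step 4: the auxiliary product `Pr` is a constant root of unity.
  set Pr : X.Fˣ := ∏ s ∈ Finset.range m, X.tauU (s • S) h with hPr_def
  have hdivPr : X.div Pr = 0 := by
    rw [hPr_def, X.div_prod]
    have hterm : ∀ s ∈ Finset.range m, X.div (X.tauU (s • S) h)
        = (∑ j : ZMod N, Finsupp.single (ι j + S - s • S) (1 : ℤ))
          - ∑ j : ZMod N, Finsupp.single (ι j - s • S) (1 : ℤ) := by
      intro s _
      rw [X.div_tauU, hdivhS, mapDomain_sub', Finsupp.mapDomain_finset_sum,
        Finsupp.mapDomain_finset_sum]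
      simp only [Finsupp.mapDomain_single]
      congr 1
      refine Finset.sum_congr rfl fun j _ => ?_
      have hx : S + ι j - s • S = ι j + S - s • S := by abel
      rw [hx]
    rw [Finset.sum_congr rfl hterm, Finset.sum_sub_distrib]
    have hA : (∑ s ∈ Finset.range m, ∑ j : ZMod N,
          Finsupp.single (ι j + S - s • S) (1 : ℤ))
        = ∑ j : ZMod N, ∑ s ∈ Finset.range m,
          Finsupp.single (ι j + S - s • S) (1 : ℤ) := Finset.sum_comm
    have hB : (∑ s ∈ Finset.range m, ∑ j : ZMod N,
          Finsupp.single (ι j - s • S) (1 : ℤ))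
        = ∑ j : ZMod N, ∑ s ∈ Finset.range m,
          Finsupp.single (ι j - s • S) (1 : ℤ) := Finset.sum_comm
    rw [hA, hB, ← Finset.sum_sub_distrib]
    refine Finset.sum_eq_zero fun j _ => ?_
    rw [telescope hm hSm (ι j), sub_self]
  obtain ⟨w, hw⟩ := X.eq_constU_of_div_eq_zero _ hdivPr
  -- `[m]_*` of the product, two ways: `w` is a root of unity.
  have hPmPr : X.pushNorm m Pr = X.constU (U ^ m) := by
    rw [hPr_def, map_prod]
    have hterm : ∀ s ∈ Finset.range m,
        X.pushNorm m (X.tauU (s • S) h) = X.constU U := by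
      intro s _
      rw [X.pushNorm_tauU, hU, X.tauU_constU]
    rw [Finset.prod_congr rfl hterm, Finset.prod_const, Finset.card_range, ← map_pow]
  have hwU : w ^ m ^ 2 = U ^ m := by
    apply X.constU_inj
    rw [← X.pushNorm_constU, ← hw, hPmPr]
  have hwc : w ^ (m ^ 2 * c) = 1 := by
    rw [pow_mul, hwU, ← pow_mul, mul_comm, pow_mul, hUc, one_pow]
  -- `ν` of the product
  set Ps : X.Fˣ := ∏ s ∈ Finset.range m, X.tauU (-(s • S)) h' with hPs_def
  have hνPr : X.constU w = X.constU (a ^ m) * Ps := by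
    have h1 : X.negPullU Pr = X.constU w := by rw [hw, X.negPullU_constU]
    have h2 : X.negPullU Pr = X.constU (a ^ m) * Ps := by
      rw [hPr_def, map_prod]
      have hterm : ∀ s ∈ Finset.range m, X.negPullU (X.tauU (s • S) h)
          = X.constU a * X.tauU (-(s • S)) h' := by
        intro s _
        rw [X.negPullU_tauU, hνh, map_mul, X.tauU_constU]
      rw [Finset.prod_congr rfl hterm, Finset.prod_mul_distrib, Finset.prod_const,
        Finset.card_range, ← map_pow, hPs_def]
    rw [← h1, h2]
  have hPmPs : X.pushNorm m Ps = X.constU (U' ^ m) := by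
    rw [hPs_def, map_prod]
    have hterm : ∀ s ∈ Finset.range m,
        X.pushNorm m (X.tauU (-(s • S)) h') = X.constU U' := by
      intro s _
      rw [X.pushNorm_tauU, hU', X.tauU_constU]
    rw [Finset.prod_congr rfl hterm, Finset.prod_const, Finset.card_range, ← map_pow]
  have hkey2 : w ^ m ^ 2 = (a ^ m) ^ m ^ 2 * U' ^ m := by
    apply X.constU_inj
    rw [map_mul, ← X.pushNorm_constU m w, ← X.pushNorm_constU m (a ^ m), hνPr, map_mul,
      hPmPs]
  have ham : (a ^ m) ^ m ^ 2 = w ^ m ^ 2 * (U' ^ m)⁻¹ := by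
    rw [hkey2, mul_inv_cancel_right]
  refine ⟨a, ⟨m ^ 3 * (c * c'), by positivity, ?_⟩, hνh⟩
  calc a ^ (m ^ 3 * (c * c')) = ((a ^ m) ^ m ^ 2) ^ (c * c') := by
        rw [← pow_mul, ← pow_mul]
        congr 1
        ring
    _ = (w ^ m ^ 2 * (U' ^ m)⁻¹) ^ (c * c') := by rw [ham]
    _ = 1 := by
        rw [mul_pow, ← pow_mul, inv_pow, ← pow_mul]
        have e1 : w ^ (m ^ 2 * (c * c')) = 1 := by
          rw [show m ^ 2 * (c * c') = m ^ 2 * c * c' by ring, pow_mul, hwc, one_pow]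
        have e2 : U' ^ (m * (c * c')) = 1 := by
          rw [show m * (c * c') = c' * (m * c) by ring, pow_mul, hU'c, one_pow]
        rw [e1, e2, inv_one, mul_one]
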